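/- arXiv:1008.3066 — 3 statements merged into one kernel-verified Lean document; each statement's English description precedes it below -/
import Mathlib

section
/- For all differentiable functions u ≥ 0 and v > 0 on a domain, and any p > 1, the generalized Picone inequality holds pointwise: |∇u|^p ≥ |∇v|^{p-2} ⟨∇v, ∇(u^p / v^{p-1})⟩. -/
/-!
With `t = u / v`, the chain rule gives `∇(u^p / v^(p-1)) = p t^(p-1) ∇u - (p-1) t^p ∇v`, so the
right-hand side equals `p t^(p-1) |∇v|^(p-2) ⟨∇v, ∇u⟩ - (p-1) (t |∇v|)^p`. Cauchy–Schwarz bounds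
this by `p (t |∇v|)^(p-1) |∇u| - (p-1) (t |∇v|)^p`, which is at most `|∇u|^p` by Young's
inequality with exponents `p / (p-1)` and `p`.
-/

open Real InnerProductSpace

lemma mul_rpow_sub_one_mul_le {p x y : ℝ} (hp : 1 < p) (hx : 0 ≤ x) (hy : 0 ≤ y) :
    p * (x ^ (p - 1) * y) ≤ (p - 1) * x ^ p + y ^ p := by
  have young := young_inequality_of_nonneg (rpow_nonneg hx (p - 1)) hy
    (HolderConjugate.conjExponent hp).symm
  have hxp : (x ^ (p - 1)) ^ (p / (p - 1)) = x ^ p := by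
    rw [← rpow_mul hx, mul_div_cancel₀ p (sub_pos.mpr hp).ne']
  rw [conjExponent, hxp, div_div_eq_mul_div] at young
  calc p * (x ^ (p - 1) * y) ≤ p * (x ^ p * (p - 1) / p + y ^ p / p) := by
        gcongr
    _ = (p - 1) * x ^ p + y ^ p := by
        field_simp

lemma HasFDerivAt.rpow_div_rpow_sub_one {E : Type*} [NormedAddCommGroup E] [NormedSpace ℝ E]
    {u v : E → ℝ} {u' v' : StrongDual ℝ E} {x : E} {p : ℝ}
    (hu : HasFDerivAt u u' x) (hv : HasFDerivAt v v' x) (hp : 1 ≤ p)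
    (hux : 0 ≤ u x) (hvx : 0 < v x) :
    HasFDerivAt (fun y => u y ^ p / v y ^ (p - 1))
      ((p * (u x / v x) ^ (p - 1)) • u' + ((1 - p) * (u x / v x) ^ p) • v') x := by
  have hv_pos : ∀ᶠ y in nhds x, 0 < v y := hv.continuousAt.eventually (eventually_gt_nhds hvx)
  have hquot : (fun y => u y ^ p / v y ^ (p - 1)) =ᶠ[nhds x] fun y => u y ^ p * v y ^ (1 - p) := by
    filter_upwards [hv_pos] with y hy
    rw [← neg_sub, rpow_neg hy.le, div_eq_mul_inv, inv_inv]
  refine ((hu.rpow_const (Or.inr hp)).mul (hv.rpow_const (Or.inl hvx.ne'))).congr_of_eventuallyEq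
    hquot |>.congr_fderiv ?_
  rw [div_rpow hux hvx.le, div_rpow hux hvx.le, show 1 - p - 1 = -p by ring, rpow_neg hvx.le,
    ← neg_sub p 1, rpow_neg hvx.le, add_comm, smul_smul, smul_smul]
  congr 2 <;> field_simp

lemma HasGradientAt.rpow_div_rpow_sub_one {F : Type*} [NormedAddCommGroup F]
    [InnerProductSpace ℝ F] [CompleteSpace F]
    {u v : F → ℝ} {a b : F} {x : F} {p : ℝ}
    (hu : HasGradientAt u a x) (hv : HasGradientAt v b x) (hp : 1 ≤ p)
    (hux : 0 ≤ u x) (hvx : 0 < v x) :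
    HasGradientAt (fun y => u y ^ p / v y ^ (p - 1))
      ((p * (u x / v x) ^ (p - 1)) • a + ((1 - p) * (u x / v x) ^ p) • b) x := by
  rw [hasGradientAt_iff_hasFDerivAt, map_add, map_smul, map_smul]
  exact hu.hasFDerivAt.rpow_div_rpow_sub_one hv.hasFDerivAt hp hux hvx

lemma norm_rpow_sub_two_mul_inner_le_norm_rpow {F : Type*} [NormedAddCommGroup F]
    [InnerProductSpace ℝ F]
    {p t : ℝ} (hp : 1 < p) (ht : 0 ≤ t) (a b : F) :
    ‖b‖ ^ (p - 2) * ⟪b, (p * t ^ (p - 1)) • a + ((1 - p) * t ^ p) • b⟫_ℝ ≤ ‖a‖ ^ p := by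
  rcases eq_or_ne b 0 with rfl | hb
  · simpa using rpow_nonneg (norm_nonneg a) p
  have hb' : 0 < ‖b‖ := norm_pos_iff.mpr hb
  have hpow_sub_two : ‖b‖ ^ (p - 2) * ‖b‖ ^ 2 = ‖b‖ ^ p := by
    rw [← rpow_natCast, ← rpow_add hb']
    norm_num
  have hpow_sub_one : ‖b‖ ^ (p - 2) * ‖b‖ = ‖b‖ ^ (p - 1) := by
    rw [← rpow_add_one hb'.ne']
    ring_nf
  have expand : ‖b‖ ^ (p - 2) * ⟪b, (p * t ^ (p - 1)) • a + ((1 - p) * t ^ p) • b⟫_ℝ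
      = p * (t ^ (p - 1) * ‖b‖ ^ (p - 2)) * ⟪b, a⟫_ℝ - (p - 1) * (t * ‖b‖) ^ p := by
    rw [inner_add_right, real_inner_smul_right, real_inner_smul_right, real_inner_self_eq_norm_sq,
      mul_rpow ht hb'.le, ← hpow_sub_two]
    ring
  have cs : ⟪b, a⟫_ℝ ≤ ‖b‖ * ‖a‖ := real_inner_le_norm b a
  calc _ = p * (t ^ (p - 1) * ‖b‖ ^ (p - 2)) * ⟪b, a⟫_ℝ - (p - 1) * (t * ‖b‖) ^ p := expand
    _ ≤ p * (t ^ (p - 1) * ‖b‖ ^ (p - 2)) * (‖b‖ * ‖a‖) - (p - 1) * (t * ‖b‖) ^ p := by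
        gcongr
    _ = p * ((t * ‖b‖) ^ (p - 1) * ‖a‖) - (p - 1) * (t * ‖b‖) ^ p := by
        rw [mul_rpow (z := p - 1) ht hb'.le, ← hpow_sub_one]
        ring
    _ ≤ ‖a‖ ^ p := by
        linarith [mul_rpow_sub_one_mul_le hp (mul_nonneg ht hb'.le) (norm_nonneg a)]

/-- Generalized Picone inequality: for differentiable `u ≥ 0` and `v > 0` on an open set
`Ω ⊆ ℝⁿ` and `p > 1`, pointwise
`|∇u|^p ≥ |∇v|^{p-2} ⟨∇v, ∇(u^p / v^{p-1})⟩`. -/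
theorem picone_inequality {n : ℕ} (Ω : Set (EuclideanSpace ℝ (Fin n))) (hΩ : IsOpen Ω)
    (p : ℝ) (hp : 1 < p) (u v : EuclideanSpace ℝ (Fin n) → ℝ)
    (hu : DifferentiableOn ℝ u Ω) (hv : DifferentiableOn ℝ v Ω)
    (hu0 : ∀ x ∈ Ω, 0 ≤ u x) (hv0 : ∀ x ∈ Ω, 0 < v x) :
    ∀ x ∈ Ω,
      ‖gradient v x‖ ^ (p - 2) *
        inner ℝ (gradient v x) (gradient (fun y => u y ^ p / v y ^ (p - 1)) x)
      ≤ ‖gradient u x‖ ^ p := by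
  intro x hx
  have hgrad := (hu.hasGradientAt (hΩ.mem_nhds hx)).rpow_div_rpow_sub_one
    (hv.hasGradientAt (hΩ.mem_nhds hx)) hp.le (hu0 x hx) (hv0 x hx)
  rw [hgrad.gradient]
  exact norm_rpow_sub_two_mul_inner_le_norm_rpow hp (div_nonneg (hu0 x hx) (hv0 x hx).le) _ _
end

section
/- If a C¹ functional E on a Banach space has no critical value in [c−ε, c+ε] and satisfies Palais–Smale, then the minimax value over a family of paths with endpoints at levels below c−ε cannot equal c. -/
/-!
By Palais–Smale, `‖E'‖ ≥ δ > 0` on the band `c - ε ≤ E ≤ c + ε`. Ekeland's variational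
principle, applied to the (lower semicontinuous) maximal level on the complete metric space of
paths from `u₀` to `u₁`, yields a path `γ` with maximal level in `[c, c + ε/2)` that no path at
uniform distance `t` undercuts by more than `δ t / 4`. A descent field along `γ`, glued from
locally constant directions by a partition of unity, pushes the part of `γ` above `c - ε/2` down
by `δ t / 2` for every small `t` while fixing the endpoints, which is a contradiction. Ekeland's
principle is what makes a single such step suffice, so no deformation flow is needed.
-/

open Set Filter Topology Metric

section Ekeland

variable {Y : Type*} [MetricSpace Y] {F : Y → ℝ} {ρ : ℝ}

def ekelandSet (F : Y → ℝ) (ρ : ℝ) (x : Y) : Set Y := {z | F z + ρ * dist x z ≤ F x}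

theorem self_mem_ekelandSet (x : Y) : x ∈ ekelandSet F ρ x := by
  simp [ekelandSet]

theorem ekelandSet_subset (hρ : 0 ≤ ρ) {x y : Y} (hy : y ∈ ekelandSet F ρ x) :
    ekelandSet F ρ y ⊆ ekelandSet F ρ x := fun z hz => by
  have := mul_le_mul_of_nonneg_left (dist_triangle x y z) hρ
  simp only [ekelandSet, mem_ofPred_eq] at hy hz ⊢
  linarith

theorem LowerSemicontinuous.isClosed_ekelandSet (hF : LowerSemicontinuous F) (ρ : ℝ) (x : Y) :
    IsClosed (ekelandSet F ρ x) :=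
  (hF.add (continuous_const.mul (continuous_const.dist continuous_id)).lowerSemicontinuous
    ).isClosed_preimage (F x)

theorem exists_mem_ekelandSet_le_add (hbdd : BddBelow (range F)) (x : Y) {η : ℝ} (hη : 0 < η) :
    ∃ x' ∈ ekelandSet F ρ x, ∀ z ∈ ekelandSet F ρ x, F x' ≤ F z + η := by
  have hne : (F '' ekelandSet F ρ x).Nonempty := ⟨F x, x, self_mem_ekelandSet x, rfl⟩
  obtain ⟨_, ⟨x', hx', rfl⟩, hlt⟩ := exists_lt_of_csInf_lt hne (lt_add_of_pos_right _ hη)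
  refine ⟨x', hx', fun z hz => ?_⟩
  have := csInf_le (hbdd.mono (image_subset_range _ _)) (mem_image_of_mem F hz)
  linarith

theorem LowerSemicontinuous.exists_le_forall_le_add_mul_dist [CompleteSpace Y]
    (hF : LowerSemicontinuous F) (hbdd : BddBelow (range F)) (hρ : 0 < ρ) (y₀ : Y) :
    ∃ y, F y ≤ F y₀ ∧ ∀ z, F y ≤ F z + ρ * dist y z := by
  set S := ekelandSet F ρ
  choose next hnext_mem hnext_le using fun x (n : ℕ) =>
    exists_mem_ekelandSet_le_add (ρ := ρ) hbdd x (pow_pos (one_half_pos (α := ℝ)) n)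
  let x : ℕ → Y := fun n => Nat.rec y₀ (fun n x => next x n) n
  have hS_anti : Antitone fun n => S (x n) :=
    antitone_nat_of_succ_le fun n => ekelandSet_subset hρ.le (hnext_mem (x n) n)
  have hx_mem : ∀ {m n}, m ≤ n → x n ∈ S (x m) := fun hmn => hS_anti hmn (self_mem_ekelandSet _)
  have hnear : ∀ n, ∀ z ∈ S (x (n + 1)), F (x (n + 1)) ≤ F z + (1 / 2) ^ n := fun n z hz =>
    hnext_le (x n) n z (hS_anti n.le_succ hz)
  have hcauchy : CauchySeq x := by
    refine Metric.cauchySeq_iff'.2 fun ε hε => ?_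
    obtain ⟨n, hn⟩ := exists_pow_lt_of_lt_one (mul_pos hρ hε) (one_half_lt_one (α := ℝ))
    refine ⟨n + 1, fun m hm => ?_⟩
    have h₁ := hnear n (x m) (hx_mem hm)
    have h₂ : F (x m) + ρ * dist (x (n + 1)) (x m) ≤ F (x (n + 1)) := hx_mem hm
    rw [dist_comm]
    nlinarith
  obtain ⟨y, hy⟩ := cauchySeq_tendsto_of_complete hcauchy
  have hy_mem : ∀ n, y ∈ S (x n) := fun n =>
    (hF.isClosed_ekelandSet ρ _).mem_of_tendsto hy (eventually_atTop.2 ⟨n, fun m => hx_mem⟩)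
  refine ⟨y, ?_, fun z => ?_⟩
  · have h₀ : F y + ρ * dist y₀ y ≤ F y₀ := hy_mem 0
    nlinarith [dist_nonneg (x := y₀) (y := y)]
  by_cases hz : z ∈ S y
  · have hFz : F y ≤ F z := by
      refine le_of_forall_pos_lt_add fun η hη => ?_
      obtain ⟨n, hn⟩ := exists_pow_lt_of_lt_one hη (one_half_lt_one (α := ℝ))
      have h₁ := hnear n z (ekelandSet_subset hρ.le (hy_mem (n + 1)) hz)
      have h₂ : F y + ρ * dist (x (n + 1)) y ≤ F (x (n + 1)) := hy_mem (n + 1)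
      nlinarith [dist_nonneg (x := x (n + 1)) (y := y)]
    nlinarith [dist_nonneg (x := y) (y := z)]
  · exact (not_le.1 hz).le

end Ekeland

theorem IsCompact.exists_pos_forall_dist_apply_lt {α β : Type*} [PseudoMetricSpace α]
    [PseudoMetricSpace β] {s : Set α} (hs : IsCompact s) {f : α → β} (hf : Continuous f)
    {ε : ℝ} (hε : 0 < ε) : ∃ r > 0, ∀ x ∈ s, ∀ y, dist x y < r → dist (f x) (f y) < ε := by
  obtain ⟨r, hr, h⟩ := Metric.mem_uniformity_dist.1 <|
    hs.uniformContinuousAt_of_continuousAt f (fun x _ => hf.continuousAt) (dist_mem_uniformity hε)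
  exact ⟨r, hr, fun x hx y hxy => h hxy hx⟩

section Paths

variable {X K : Type*} [TopologicalSpace X] [TopologicalSpace K] {E : X → ℝ}

noncomputable def maxLevel (E : X → ℝ) (f : C(K, X)) : ℝ := ⨆ k, E (f k)

theorem le_maxLevel [CompactSpace K] (hE : Continuous E) (f : C(K, X)) (k : K) :
    E (f k) ≤ maxLevel E f :=
  le_ciSup (isCompact_range (hE.comp f.continuous)).bddAbove k

theorem maxLevel_le [Nonempty K] {f : C(K, X)} {M : ℝ} (h : ∀ k, E (f k) ≤ M) :
    maxLevel E f ≤ M :=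
  ciSup_le h

theorem lowerSemicontinuous_maxLevel [CompactSpace K] (hE : Continuous E) :
    LowerSemicontinuous (maxLevel E : C(K, X) → ℝ) :=
  lowerSemicontinuous_ciSup (fun f => (isCompact_range (hE.comp f.continuous)).bddAbove)
    fun k => (hE.comp (continuous_eval_const k)).lowerSemicontinuous

open unitInterval in
def pathsBetween (u₀ u₁ : X) : Set C(I, X) := {f | f 0 = u₀ ∧ f 1 = u₁}

theorem isClosed_pathsBetween [T2Space X] (u₀ u₁ : X) : IsClosed (pathsBetween u₀ u₁) :=
  (isClosed_eq (continuous_eval_const _) continuous_const).inter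
    (isClosed_eq (continuous_eval_const _) continuous_const)

theorem setOf_sSup_image_eq_image_maxLevel (E : X → ℝ) (u₀ u₁ : X) :
    {m : ℝ | ∃ g : ℝ → X, ContinuousOn g (Icc 0 1) ∧ g 0 = u₀ ∧ g 1 = u₁ ∧
      m = sSup ((fun s => E (g s)) '' Icc 0 1)} = maxLevel E '' pathsBetween u₀ u₁ := by
  ext m
  constructor
  · rintro ⟨g, hg, hg₀, hg₁, rfl⟩
    refine ⟨⟨(Icc 0 1).domRestrict g, hg.domRestrict⟩, ⟨hg₀, hg₁⟩, ?_⟩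
    rw [maxLevel, sSup_image']
    rfl
  · rintro ⟨f, ⟨hf₀, hf₁⟩, rfl⟩
    refine ⟨IccExtend zero_le_one f, f.continuous.Icc_extend'.continuousOn, ?_, ?_, ?_⟩
    · rw [IccExtend_left]; exact hf₀
    · rw [IccExtend_right]; exact hf₁
    · rw [sSup_image']
      exact iSup_congr fun s => by rw [IccExtend_val]

theorem nonempty_pathsBetween [PathConnectedSpace X] (u₀ u₁ : X) :
    (pathsBetween u₀ u₁).Nonempty :=
  let γ := PathConnectedSpace.somePath u₀ u₁
  ⟨γ.toContinuousMap, γ.source, γ.target⟩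

end Paths

section Analysis

variable {X : Type*} [NormedAddCommGroup X] [NormedSpace ℝ X]

def PalaisSmale (E : X → ℝ) : Prop :=
  ∀ u : ℕ → X, (∃ C : ℝ, ∀ n, |E (u n)| ≤ C) →
    Tendsto (fun n => ‖fderiv ℝ E (u n)‖) atTop (𝓝 0) →
    ∃ (x : X) (φ : ℕ → ℕ), StrictMono φ ∧ Tendsto (u ∘ φ) atTop (𝓝 x)

theorem PalaisSmale.exists_pos_le_norm_fderiv {E : X → ℝ} (hPS : PalaisSmale E)
    (hE : ContDiff ℝ 1 E) {a b : ℝ} (hcrit : ∀ x, fderiv ℝ E x = 0 → E x ∉ Icc a b) :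
    ∃ δ > 0, ∀ x, E x ∈ Icc a b → δ ≤ ‖fderiv ℝ E x‖ := by
  by_contra! h
  choose u hu_mem hu_lt using fun n : ℕ => h (1 / (n + 1)) Nat.one_div_pos_of_nat
  have hbdd : ∃ C, ∀ n, |E (u n)| ≤ C :=
    ⟨max |a| |b|, fun n => abs_le_max_abs_abs (hu_mem n).1 (hu_mem n).2⟩
  have hgrad : Tendsto (fun n => ‖fderiv ℝ E (u n)‖) atTop (𝓝 0) :=
    squeeze_zero (fun n => norm_nonneg _) (fun n => (hu_lt n).le)
      tendsto_one_div_add_atTop_nhds_zero_nat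
  obtain ⟨x, φ, hφ, hx⟩ := hPS u hbdd hgrad
  have hcrit_x : fderiv ℝ E x = 0 := by
    refine norm_eq_zero.1 (tendsto_nhds_unique ?_ (hgrad.comp hφ.tendsto_atTop))
    exact ((hE.continuous_fderiv one_ne_zero).norm.tendsto x).comp hx
  exact hcrit x hcrit_x <| isClosed_Icc.mem_of_tendsto ((hE.continuous.tendsto x).comp hx)
    (Eventually.of_forall fun n => hu_mem (φ n))

theorem image_add_smul_le_of_fderiv_apply_le {E : X → ℝ} (hE : Differentiable ℝ E) {x v : X}
    {t C : ℝ} (ht : 0 ≤ t) (hC : ∀ τ ∈ Icc 0 t, fderiv ℝ E (x + τ • v) v ≤ C) :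
    E (x + t • v) ≤ E x + C * t := by
  have hderiv : ∀ τ : ℝ, HasDerivAt (fun τ : ℝ => E (x + τ • v)) (fderiv ℝ E (x + τ • v) v) τ :=
    fun τ => by
      have := (hE (x + τ • v)).hasFDerivAt.comp_hasDerivAt τ
        (((hasDerivAt_id' τ).smul_const v).const_add x)
      rw [one_smul] at this
      exact this
  have hdiff : Differentiable ℝ fun τ : ℝ => E (x + τ • v) := fun τ => (hderiv τ).differentiableAt
  have := (convex_Icc 0 t).image_sub_le_mul_sub_of_deriv_le hdiff.continuous.continuousOn
    hdiff.differentiableOn (fun τ hτ => (hderiv τ).deriv ▸ hC τ (interior_subset hτ))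
    0 (left_mem_Icc.2 ht) t (right_mem_Icc.2 ht) ht
  simp only [zero_smul, add_zero, sub_zero] at this
  linarith

theorem ContinuousLinearMap.exists_norm_le_one_forall_apply_lt {f : X →L[ℝ] ℝ} {δ : ℝ}
    (hδ : 0 < δ) (hf : δ ≤ ‖f‖) :
    ∃ v : X, ‖v‖ ≤ 1 ∧ ∀ g : X →L[ℝ] ℝ, ‖g - f‖ < δ / 4 → g v < -(δ / 2) := by
  obtain ⟨v₀, hv₀, hfv₀⟩ := f.exists_lt_apply_of_lt_opNorm (r := 3 * δ / 4) (by linarith)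
  obtain ⟨v, hv, hfv⟩ : ∃ v : X, ‖v‖ ≤ 1 ∧ f v < -(3 * δ / 4) := by
    rcases lt_abs.1 hfv₀ with h | h
    · exact ⟨-v₀, by simpa using hv₀.le, by simpa using h⟩
    · exact ⟨v₀, hv₀.le, by linarith⟩
  refine ⟨v, hv, fun g hg => ?_⟩
  have hgv : |g v - f v| ≤ δ / 4 :=
    ((g - f).le_opNorm v).trans (by nlinarith [norm_nonneg (g - f)])
  linarith [(abs_le.1 hgv).2]

section Deformation

variable {K : Type*} [TopologicalSpace K] [CompactSpace K] [T2Space K] {E : X → ℝ}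
  {a' a δ : ℝ}

theorem exists_descent_field (hE : ContDiff ℝ 1 E) (γ : C(K, X)) (ha : a' < a)
    (hδ : 0 < δ) (hgrad : ∀ k, a ≤ E (γ k) → δ ≤ ‖fderiv ℝ E (γ k)‖) :
    ∃ r > 0, ∃ w : C(K, X), ∀ k, ‖w k‖ ≤ 1 ∧ (E (γ k) ≤ a' → w k = 0) ∧
      ∀ z ∈ closedBall (γ k) r, fderiv ℝ E z (w k) ≤ if a ≤ E (γ k) then -(δ / 2) else 0 := by
  obtain ⟨r, hr, hclose⟩ := (isCompact_range γ.continuous).exists_pos_forall_dist_apply_lt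
    (hE.continuous_fderiv one_ne_zero) (by positivity : 0 < δ / 4)
  set C : K → ℝ := fun k => if a ≤ E (γ k) then -(δ / 2) else 0
  refine ⟨r / 2, half_pos hr, exists_continuous_forall_mem_convex_of_local_const
    (t := fun k => {v | ‖v‖ ≤ 1 ∧ (E (γ k) ≤ a' → v = 0) ∧
      ∀ z ∈ closedBall (γ k) (r / 2), fderiv ℝ E z v ≤ C k}) ?_ ?_⟩
  · intro k v hv w hw μ ν hμ hν hμν
    refine ⟨mem_closedBall_zero_iff.1 <| convex_closedBall (0 : X) 1
      (mem_closedBall_zero_iff.2 hv.1) (mem_closedBall_zero_iff.2 hw.1) hμ hν hμν,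
      fun hk => by simp [hv.2.1 hk, hw.2.1 hk], fun z hz => ?_⟩
    calc fderiv ℝ E z (μ • v + ν • w) = μ * fderiv ℝ E z v + ν * fderiv ℝ E z w := by simp
      _ ≤ μ * C k + ν * C k := by gcongr; exacts [hv.2.2 z hz, hw.2.2 z hz]
      _ = C k := by rw [← add_mul, hμν, one_mul]
  intro k₀
  by_cases hk₀ : a ≤ E (γ k₀)
  · obtain ⟨v, hv, hdescent⟩ :=
      ContinuousLinearMap.exists_norm_le_one_forall_apply_lt hδ (hgrad k₀ hk₀)
    refine ⟨v, ?_⟩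
    have hnear : ∀ᶠ k in 𝓝 k₀, dist (γ k) (γ k₀) < r / 2 ∧ a' < E (γ k) :=
      ((γ.continuous.tendsto k₀).eventually (ball_mem_nhds _ (half_pos hr))).and
        ((hE.continuous.comp γ.continuous).tendsto k₀ |>.eventually_const_lt (ha.trans_le hk₀))
    filter_upwards [hnear] with k ⟨hk, hk'⟩
    refine ⟨hv, fun h => absurd h (not_le.2 hk'), fun z hz => ?_⟩
    have hz₀ : dist (γ k₀) z < r := by
      linarith [dist_triangle_left (γ k₀) z (γ k), mem_closedBall'.1 hz]
    have := hdescent _ <| by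
      simpa [dist_eq_norm', norm_sub_rev] using hclose _ (mem_range_self k₀) z hz₀
    simp only [C]
    split_ifs <;> linarith
  · refine ⟨0, ?_⟩
    filter_upwards [(hE.continuous.comp γ.continuous).tendsto k₀ |>.eventually_lt_const
      (not_le.1 hk₀)] with k (hk : E (γ k) < a)
    simp [C, not_le.2 hk]

theorem exists_deformation (hE : ContDiff ℝ 1 E) (γ : C(K, X)) (ha : a' < a)
    (hδ : 0 < δ) (hgrad : ∀ k, a ≤ E (γ k) → δ ≤ ‖fderiv ℝ E (γ k)‖) :
    ∃ r > 0, ∀ t ∈ Icc 0 r, ∃ γ' : C(K, X), dist γ' γ ≤ t ∧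
      (∀ k, E (γ k) ≤ a' → γ' k = γ k) ∧ (∀ k, E (γ' k) ≤ E (γ k)) ∧
      ∀ k, a ≤ E (γ k) → E (γ' k) ≤ E (γ k) - δ / 2 * t := by
  obtain ⟨r, hr, w, hw⟩ := exists_descent_field hE γ ha hδ hgrad
  refine ⟨r, hr, fun t ht => ⟨γ + t • w, ?_, fun k hk => by simp [(hw k).2.1 hk], ?_⟩⟩
  · refine (ContinuousMap.dist_le ht.1).2 fun k => ?_
    simpa [dist_eq_norm, norm_smul, abs_of_nonneg ht.1] using
      mul_le_of_le_one_right ht.1 (hw k).1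
  have hstep : ∀ k, E (γ k + t • w k) ≤ E (γ k) + (if a ≤ E (γ k) then -(δ / 2) else 0) * t :=
    fun k => image_add_smul_le_of_fderiv_apply_le (hE.differentiable one_ne_zero) ht.1
      fun τ hτ => (hw k).2.2 _ <| by
        simpa [norm_smul, abs_of_nonneg hτ.1] using
          (mul_le_of_le_one_right hτ.1 (hw k).1).trans (hτ.2.trans ht.2)
  refine ⟨fun k => ?_, fun k hk => ?_⟩ <;> change E (γ k + t • w k) ≤ _
  · have := hstep k
    split_ifs at this <;> nlinarith [hδ, ht.1]
  · have := hstep k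
    rw [if_pos hk] at this
    linarith

theorem exists_maxLevel_le_sub [Nonempty K] (hE : ContDiff ℝ 1 E) (γ : C(K, X)) (ha : a' < a)
    (hδ : 0 < δ) (hgrad : ∀ k, a ≤ E (γ k) → δ ≤ ‖fderiv ℝ E (γ k)‖) (haγ : a < maxLevel E γ) :
    ∃ t > 0, ∃ γ' : C(K, X), dist γ' γ ≤ t ∧ (∀ k, E (γ k) ≤ a' → γ' k = γ k) ∧
      maxLevel E γ' ≤ maxLevel E γ - δ / 2 * t := by
  obtain ⟨r, hr, hdeform⟩ := exists_deformation hE γ ha hδ hgrad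
  set t := min r (2 * (maxLevel E γ - a) / δ)
  have ht : 0 < t := lt_min hr (div_pos (by linarith) hδ)
  have htδ : δ / 2 * t ≤ maxLevel E γ - a := by
    have := min_le_right r (2 * (maxLevel E γ - a) / δ)
    rw [le_div_iff₀ hδ] at this
    linarith
  obtain ⟨γ', hdist, hfix, hle, hdesc⟩ := hdeform t ⟨ht.le, min_le_left _ _⟩
  refine ⟨t, ht, γ', hdist, hfix, maxLevel_le fun k => ?_⟩
  by_cases hk : a ≤ E (γ k)
  · linarith [hdesc k hk, le_maxLevel hE.continuous γ k]
  · linarith [hle k]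

end Deformation

end Analysis

/-- Deformation argument: if `E` is `C¹`, satisfies the Palais–Smale condition, the
endpoints `u₀, u₁` have energies `< c − ε`, `c` is the minimax value over paths from
`u₀` to `u₁`, and `E` has no critical point at any level in `[c−ε, c+ε]`, then a
contradiction follows; hence `c` is a critical value. -/
theorem minimax_is_critical_value_deformation {X : Type*} [NormedAddCommGroup X]
    [NormedSpace ℝ X] [CompleteSpace X]
    (E : X → ℝ) (hE : ContDiff ℝ 1 E)
    (hPS : ∀ u : ℕ → X, (∃ C : ℝ, ∀ n, |E (u n)| ≤ C) →
      Tendsto (fun n => ‖fderiv ℝ E (u n)‖) atTop (nhds 0) →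
      ∃ (x : X) (φ : ℕ → ℕ), StrictMono φ ∧ Tendsto (u ∘ φ) atTop (nhds x))
    (u₀ u₁ : X) (c ε : ℝ) (hε : 0 < ε)
    (hE0 : E u₀ < c - ε) (hE1 : E u₁ < c - ε)
    (hc : c = sInf {m : ℝ | ∃ g : ℝ → X, ContinuousOn g (Icc 0 1) ∧
      g 0 = u₀ ∧ g 1 = u₁ ∧ m = sSup ((fun s => E (g s)) '' Icc 0 1)})
    (hnc : ∀ x : X, fderiv ℝ E x = 0 → E x ∉ Icc (c - ε) (c + ε)) :
    False := by
  obtain ⟨δ, hδ, hgrad⟩ := PalaisSmale.exists_pos_le_norm_fderiv hPS hE hnc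
  have := (isClosed_pathsBetween u₀ u₁).completeSpace_coe
  have := (nonempty_pathsBetween u₀ u₁).to_subtype
  let F : pathsBetween u₀ u₁ → ℝ := fun f => maxLevel E f.1
  have hF_bdd : BddBelow (range F) :=
    ⟨E u₀, forall_mem_range.2 fun f => f.2.1 ▸ le_maxLevel hE.continuous f.1 0⟩
  have hc_eq : c = ⨅ f, F f := by rw [hc, setOf_sSup_image_eq_image_maxLevel, sInf_image']
  have hc_le : ∀ f, c ≤ F f := fun f => hc_eq ▸ ciInf_le hF_bdd f
  obtain ⟨f₀, hf₀⟩ : ∃ f₀, F f₀ < c + ε / 2 := exists_lt_of_ciInf_lt (hc_eq ▸ by linarith)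
  obtain ⟨f, hf_le, hf_min⟩ := ((lowerSemicontinuous_maxLevel hE.continuous).comp
    continuous_subtype_val).exists_le_forall_le_add_mul_dist hF_bdd (by positivity : 0 < δ / 4) f₀
  have hband : ∀ k, c - ε / 2 ≤ E (f.1 k) → δ ≤ ‖fderiv ℝ E (f.1 k)‖ := fun k hk =>
    hgrad _ ⟨by linarith, by linarith [le_maxLevel hE.continuous f.1 k]⟩
  obtain ⟨t, ht, γ, hdist, hfix, hdrop⟩ := exists_maxLevel_le_sub hE f.1
    (by linarith : c - ε < c - ε / 2) hδ hband (by linarith [hc_le f])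
  obtain ⟨hf_start, hf_end⟩ : f.1 0 = u₀ ∧ f.1 1 = u₁ := f.2
  have hγ : γ ∈ pathsBetween u₀ u₁ :=
    ⟨(hfix 0 (by rw [hf_start]; linarith)).trans hf_start,
      (hfix 1 (by rw [hf_end]; linarith)).trans hf_end⟩
  have hekeland : F f ≤ maxLevel E γ + δ / 4 * dist γ f.1 := by
    simpa [Subtype.dist_eq, dist_comm] using hf_min ⟨γ, hγ⟩
  nlinarith [mul_le_mul_of_nonneg_left hdist (by positivity : 0 ≤ δ / 4)]
end

section
/- Brezis–Lieb type strong convergence criterion: let 1 < p < ∞ and (uₙ) ⊂ L^p with uₙ → u a.e. and (uₙ) bounded in L^p. Then lim (‖uₙ‖_p^p − ‖uₙ − u‖_p^p) = ‖u‖_p^p. -/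
/-!
Convexity of `t ↦ t ^ p` gives, for every `ε > 0`, a constant `C` with
`||x| ^ p - |y| ^ p| ≤ ε (|x| ^ p + |y| ^ p) + C |x - y| ^ p`. With `x = uₙ` and `y = uₙ - u` this
bounds `|uₙ| ^ p - |uₙ - u| ^ p - |u| ^ p` by `ε` times functions whose integrals are bounded
uniformly in `n`, plus an integrable multiple of `|u| ^ p`. What exceeds the `ε`-term is dominated
and tends to `0` a.e., so by dominated convergence the whole integrand tends to `0` in `L¹`.
-/

open MeasureTheory Filter Topology Set

open scoped ENNReal NNReal

namespace Real

lemma add_rpow_le_one_sub_rpow_mul_add_rpow_mul {p t x y : ℝ} (hp : 1 ≤ p) (ht₀ : 0 < t)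
    (ht₁ : t < 1) (hx : 0 ≤ x) (hy : 0 ≤ y) :
    (x + y) ^ p ≤ (1 - t) ^ (1 - p) * x ^ p + t ^ (1 - p) * y ^ p := by
  have ht : 0 < 1 - t := sub_pos.2 ht₁
  have hscale : ∀ s z : ℝ, 0 < s → 0 ≤ z → s * (z / s) ^ p = s ^ (1 - p) * z ^ p := by
    intro s z hs hz
    rw [div_rpow hz hs.le, rpow_sub hs, rpow_one]
    ring
  -- convexity at the points `x / (1 - t)` and `y / t` with weights `1 - t` and `t`
  have h := (convexOn_rpow hp).2 (mem_Ici.2 (div_nonneg hx ht.le))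
    (mem_Ici.2 (div_nonneg hy ht₀.le)) ht.le ht₀.le (sub_add_cancel 1 t)
  simp only [smul_eq_mul, mul_div_cancel₀ _ ht.ne', mul_div_cancel₀ _ ht₀.ne'] at h
  rwa [hscale _ _ ht hx, hscale _ _ ht₀ hy] at h

lemma exists_add_rpow_le {p ε : ℝ} (hp : 1 ≤ p) (hε : 0 < ε) :
    ∃ C, ∀ x y : ℝ, 0 ≤ x → 0 ≤ y → (x + y) ^ p ≤ (1 + ε) * x ^ p + C * y ^ p := by
  have hcont : ContinuousAt (fun t : ℝ => (1 - t) ^ (1 - p)) 0 :=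
    (continuousAt_const.sub continuousAt_id).rpow_const (Or.inl (by norm_num))
  have hsmall : ∀ᶠ t in 𝓝[>] 0, (1 - t) ^ (1 - p) < 1 + ε ∧ t ∈ Ioo 0 1 :=
    ((hcont.eventually (gt_mem_nhds (by simpa using hε))).filter_mono nhdsWithin_le_nhds).and
      (Ioo_mem_nhdsGT one_pos)
  obtain ⟨t, hlt, ht₀, ht₁⟩ := hsmall.exists
  refine ⟨t ^ (1 - p), fun x y hx hy => ?_⟩
  calc (x + y) ^ p ≤ (1 - t) ^ (1 - p) * x ^ p + t ^ (1 - p) * y ^ p :=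
        add_rpow_le_one_sub_rpow_mul_add_rpow_mul hp ht₀ ht₁ hx hy
    _ ≤ (1 + ε) * x ^ p + t ^ (1 - p) * y ^ p := by gcongr

lemma exists_abs_abs_rpow_sub_abs_rpow_le {p ε : ℝ} (hp : 1 ≤ p) (hε : 0 < ε) :
    ∃ C, ∀ x y : ℝ, |(|x| ^ p - |y| ^ p)| ≤ ε * (|x| ^ p + |y| ^ p) + C * |x - y| ^ p := by
  obtain ⟨C, hC⟩ := exists_add_rpow_le hp hε
  have key : ∀ x y : ℝ, |x| ^ p ≤ (1 + ε) * |y| ^ p + C * |x - y| ^ p := fun x y =>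
    calc |x| ^ p ≤ (|y| + |x - y|) ^ p := by
          gcongr; simpa using abs_add_le y (x - y)
      _ ≤ _ := hC _ _ (abs_nonneg _) (abs_nonneg _)
  refine ⟨C, fun x y => abs_sub_le_iff.2 ⟨?_, ?_⟩⟩
  · have := key x y
    have : 0 ≤ ε * |x| ^ p := by positivity
    linarith
  · have := key y x
    rw [abs_sub_comm] at this
    have : 0 ≤ ε * |y| ^ p := by positivity
    linarith

end Real

namespace MeasureTheory

variable {Ω : Type*} [MeasurableSpace Ω] {μ : Measure Ω}

theorem MemLp.integrable_abs_rpow {f : Ω → ℝ} {p : ℝ} (hp : 0 < p)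
    (hf : MemLp f (ENNReal.ofReal p) μ) : Integrable (fun x => |f x| ^ p) μ := by
  simpa [ENNReal.toReal_ofReal hp.le] using
    hf.integrable_norm_rpow (by simpa using hp) ENNReal.ofReal_ne_top

theorem integral_abs_rpow_le_of_eLpNorm_le {f : Ω → ℝ} {p : ℝ} {C : ℝ≥0} (hp : 0 < p)
    (hf : AEStronglyMeasurable f μ) (hC : eLpNorm f (ENNReal.ofReal p) μ ≤ C) :
    ∫ x, |f x| ^ p ∂μ ≤ (C : ℝ) ^ p := by
  have hnorm : lpNorm f (ENNReal.ofReal p) μ ≤ C :=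
    toReal_eLpNorm hf ▸ ENNReal.toReal_le_coe_of_le_coe hC
  rw [lpNorm_eq_integral_norm_rpow_toReal (by simpa using hp) ENNReal.ofReal_ne_top hf,
    ENNReal.toReal_ofReal hp.le] at hnorm
  simpa using (Real.rpow_inv_le_iff_of_pos (integral_nonneg fun _ => by positivity) C.2 hp).1 hnorm

theorem tendsto_integral_abs_of_le_mul_add {F H : ℕ → Ω → ℝ} {M : ℝ}
    (hF : ∀ n, AEStronglyMeasurable (F n) μ) (hlim : ∀ᵐ x ∂μ, Tendsto (F · x) atTop (𝓝 0))
    (hH : ∀ n, Integrable (H n) μ) (hH₀ : ∀ n, 0 ≤ᵐ[μ] H n) (hHM : ∀ n, ∫ x, H n x ∂μ ≤ M)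
    (hdom : ∀ ε > 0, ∃ G : Ω → ℝ, Integrable G μ ∧ ∀ n, ∀ᵐ x ∂μ, |F n x| ≤ ε * H n x + G x) :
    Tendsto (fun n => ∫ x, |F n x| ∂μ) atTop (𝓝 0) := by
  have hM : 0 ≤ M := (integral_nonneg_of_ae (hH₀ 0)).trans (hHM 0)
  refine tendsto_order.2 ⟨fun a ha => Eventually.of_forall fun n =>
    ha.trans_le (integral_nonneg fun _ => abs_nonneg _), fun a ha => ?_⟩
  set ε := a / (2 * (M + 1))
  obtain ⟨G, hG, hFG⟩ := hdom ε (by positivity)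
  set W : ℕ → Ω → ℝ := fun n x => max (|F n x| - ε * H n x) 0
  have hW_meas : ∀ n, AEStronglyMeasurable (W n) μ := fun n =>
    ((hF n).norm.sub ((hH n).1.const_mul ε)).sup aestronglyMeasurable_const
  have hW_le : ∀ n, ∀ᵐ x ∂μ, ‖W n x‖ ≤ |G x| := fun n => by
    filter_upwards [hFG n] with x hx
    rw [Real.norm_of_nonneg (le_max_right _ _)]
    exact max_le ((sub_le_iff_le_add.2 (hx.trans_eq (add_comm _ _))).trans (le_abs_self _))
      (abs_nonneg _)
  have hW_lim : ∀ᵐ x ∂μ, Tendsto (W · x) atTop (𝓝 0) := by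
    filter_upwards [hlim, ae_all_iff.2 hH₀] with x hx hx₀
    refine squeeze_zero (fun n => le_max_right _ _) (fun n => ?_) (by simpa using hx.abs)
    exact max_le (sub_le_self _ (mul_nonneg (by positivity) (hx₀ n))) (abs_nonneg _)
  have hW : Tendsto (fun n => ∫ x, W n x ∂μ) atTop (𝓝 0) := by
    simpa using tendsto_integral_of_dominated_convergence _ hW_meas hG.abs hW_le hW_lim
  filter_upwards [hW.eventually (gt_mem_nhds (half_pos ha))] with n hn
  have hWn : Integrable (W n) μ := hG.abs.mono' (hW_meas n) (hW_le n)
  calc ∫ x, |F n x| ∂μ ≤ ∫ x, (W n x + ε * H n x) ∂μ :=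
        integral_mono_of_nonneg (.of_forall fun _ => abs_nonneg _)
          (hWn.add ((hH n).const_mul ε)) (.of_forall fun x => by
            have := le_max_left (|F n x| - ε * H n x) 0
            linarith)
    _ = ∫ x, W n x ∂μ + ε * ∫ x, H n x ∂μ := by
        rw [integral_add hWn ((hH n).const_mul ε), integral_const_mul]
    _ < a / 2 + ε * (M + 1) := by
        gcongr
        linarith [hHM n]
    _ = a := by simp only [ε]; field_simp; ring

theorem tendsto_integral_abs_rpow_sub_of_integral_le {p M : ℝ} (hp : 1 ≤ p) {u : ℕ → Ω → ℝ}
    {v : Ω → ℝ} (hu : ∀ n, MemLp (u n) (ENNReal.ofReal p) μ) (hv : MemLp v (ENNReal.ofReal p) μ)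
    (hM : ∀ n, ∫ x, |u n x| ^ p ∂μ + ∫ x, |u n x - v x| ^ p ∂μ ≤ M)
    (hae : ∀ᵐ x ∂μ, Tendsto (fun n => u n x) atTop (𝓝 (v x))) :
    Tendsto (fun n => (∫ x, |u n x| ^ p ∂μ) - ∫ x, |u n x - v x| ^ p ∂μ)
      atTop (𝓝 (∫ x, |v x| ^ p ∂μ)) := by
  have hp₀ : 0 < p := by linarith
  have hIu : ∀ n, Integrable (fun x => |u n x| ^ p) μ := fun n => (hu n).integrable_abs_rpow hp₀
  have hIdiff : ∀ n, Integrable (fun x => |u n x - v x| ^ p) μ := fun n =>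
    ((hu n).sub hv).integrable_abs_rpow hp₀
  have hIv : Integrable (fun x => |v x| ^ p) μ := hv.integrable_abs_rpow hp₀
  have hcont : Continuous fun y : ℝ => |y| ^ p := continuous_abs.rpow_const fun _ => Or.inr hp₀.le
  have hF := tendsto_integral_abs_of_le_mul_add
    (F := fun n x => |u n x| ^ p - |u n x - v x| ^ p - |v x| ^ p)
    (H := fun n x => |u n x| ^ p + |u n x - v x| ^ p) (fun n => by fun_prop)
    (by
      filter_upwards [hae] with x hx
      simpa [Real.zero_rpow hp₀.ne'] using (((hcont.tendsto _).comp hx).sub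
        ((hcont.tendsto _).comp (hx.sub_const (v x)))).sub_const (|v x| ^ p))
    (fun n => (hIu n).add (hIdiff n)) (fun n => .of_forall fun x => by positivity)
    (fun n => (integral_add (hIu n) (hIdiff n)).trans_le (hM n))
    (fun ε hε => by
      obtain ⟨K, hK⟩ := Real.exists_abs_abs_rpow_sub_abs_rpow_le hp hε
      refine ⟨fun x => (K + 1) * |v x| ^ p, hIv.const_mul _, fun n => .of_forall fun x => ?_⟩
      have hpt := hK (u n x) (u n x - v x)
      rw [sub_sub_cancel] at hpt
      have htri := abs_sub (|u n x| ^ p - |u n x - v x| ^ p) (|v x| ^ p)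
      rw [abs_of_nonneg (by positivity : 0 ≤ |v x| ^ p)] at htri
      dsimp only
      linarith)
  refine tendsto_sub_nhds_zero_iff.1 (squeeze_zero_norm (fun n => ?_) hF)
  have hIsub : Integrable (fun x => |u n x| ^ p - |u n x - v x| ^ p) μ := (hIu n).sub (hIdiff n)
  rw [← integral_sub (hIu n) (hIdiff n), ← integral_sub hIsub hIv]
  exact norm_integral_le_integral_norm _

end MeasureTheory

theorem brezis_lieb_general {Ω : Type*} [MeasurableSpace Ω] (μ : Measure Ω)
    (p : ℝ) (hp : 1 ≤ p) (u : ℕ → Ω → ℝ) (v : Ω → ℝ)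
    (hLp : ∀ n, MemLp (u n) (ENNReal.ofReal p) μ)
    (hbdd : ∃ C : NNReal, ∀ n, eLpNorm (u n) (ENNReal.ofReal p) μ ≤ C)
    (hae : ∀ᵐ x ∂μ, Tendsto (fun n => u n x) atTop (nhds (v x))) :
    Tendsto (fun n => (∫ x, |u n x| ^ p ∂μ) - ∫ x, |u n x - v x| ^ p ∂μ)
      atTop (nhds (∫ x, |v x| ^ p ∂μ)) := by
  obtain ⟨C, hC⟩ := hbdd
  have hp₀ : 0 < p := by linarith
  have hv : AEStronglyMeasurable v μ :=
    aestronglyMeasurable_of_tendsto_ae _ (fun n => (hLp n).1) hae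
  have hvC : eLpNorm v (ENNReal.ofReal p) μ ≤ C :=
    (Lp.eLpNorm_lim_le_liminf_eLpNorm (fun n => (hLp n).1) v hae).trans
      (liminf_le_of_frequently_le (.of_forall hC))
  have hdiffC : ∀ n, eLpNorm (u n - v) (ENNReal.ofReal p) μ ≤ ↑(C + C) := fun n =>
    (eLpNorm_sub_le (hLp n).1 hv (by simpa using hp)).trans
      ((add_le_add (hC n) hvC).trans_eq (ENNReal.coe_add C C).symm)
  refine tendsto_integral_abs_rpow_sub_of_integral_le hp hLp
    ⟨hv, hvC.trans_lt ENNReal.coe_lt_top⟩ (fun n => add_le_add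
      (integral_abs_rpow_le_of_eLpNorm_le hp₀ (hLp n).1 (hC n))
      (integral_abs_rpow_le_of_eLpNorm_le (f := u n - v) hp₀ ((hLp n).1.sub hv) (hdiffC n))) hae

/-- Brezis–Lieb lemma: if `1 ≤ p < ∞`, `(uₙ)` is bounded in `L^p` and converges a.e.
to `u`, then `‖uₙ‖_p^p − ‖uₙ − u‖_p^p → ‖u‖_p^p`. -/
theorem brezis_lieb {Ω : Type*} [MeasurableSpace Ω] (μ : Measure Ω)
    (p : ℝ) (hp : 1 ≤ p) (u : ℕ → Ω → ℝ) (v : Ω → ℝ)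
    (hLp : ∀ n, MemLp (u n) (ENNReal.ofReal p) μ)
    (hbdd : ∃ C : NNReal, ∀ n, eLpNorm (u n) (ENNReal.ofReal p) μ ≤ C)
    (hv : AEStronglyMeasurable v μ)
    (hae : ∀ᵐ x ∂μ, Tendsto (fun n => u n x) atTop (nhds (v x))) :
    Tendsto (fun n => (∫ x, |u n x| ^ p ∂μ) - ∫ x, |u n x - v x| ^ p ∂μ)
      atTop (nhds (∫ x, |v x| ^ p ∂μ)) :=
  brezis_lieb_general μ p hp u v hLp hbdd hae
end
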